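/- arXiv:1001.2076 — 2 statements merged into one kernel-verified Lean document; each statement's English description precedes it below -/
import Mathlib

section
/- Let 𝓑 = { i^λ E_α : λ ∈ {0,1}, α ⊆ {1,...,2m} } where E_α is the ordered product of generators E_k coming from the Clifford-algebra representation (E_s = i(Z^{⊗(s-1)} ⊗ iXZ ⊗ I₂^{⊗(m-s)}), E_{s+m} = i(Z^{⊗(s-1)} ⊗ X ⊗ I₂^{⊗(m-s)}) for s = 1,...,m). Then 𝓑 ∪ (−𝓑) equals the Pauli group G_m = { i^μ B₁⊗...⊗B_m : μ ∈ ℤ₄, B_k ∈ {I₂, X, Z, iXZ} }, and 𝓑 ∩ (−𝓑) = ∅. -/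
open Matrix

def X2 : Matrix (Fin 2) (Fin 2) ℂ := !![0, 1; 1, 0]
def Z2 : Matrix (Fin 2) (Fin 2) ℂ := !![1, 0; 0, -1]

def kronPow (m : ℕ) (B : Fin m → Matrix (Fin 2) (Fin 2) ℂ) :
    Matrix (Fin m → Fin 2) (Fin m → Fin 2) ℂ :=
  Matrix.of fun i j => ∏ k, B k (i k) (j k)

/-- Clifford generators: for s = 1,…,m,
E_s = i(Z^{⊗(s-1)} ⊗ iXZ ⊗ I₂^{⊗(m-s)}), E_{s+m} = i(Z^{⊗(s-1)} ⊗ X ⊗ I₂^{⊗(m-s)}). -/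
noncomputable def Egen (m : ℕ) (k : Fin (2 * m)) :
    Matrix (Fin m → Fin 2) (Fin m → Fin 2) ℂ :=
  Complex.I • kronPow m (fun j =>
    if k.val < m then
      (if j.val < k.val then Z2
       else if j.val = k.val then Complex.I • (X2 * Z2) else 1)
    else
      (if j.val < k.val - m then Z2
       else if j.val = k.val - m then X2 else 1))

/-- Ordered product E_α = E_{i₁}⋯E_{i_r} for α = {i₁ < ⋯ < i_r}, E_∅ = I. -/
noncomputable def Eprod (m : ℕ) (α : Finset (Fin (2 * m))) :
    Matrix (Fin m → Fin 2) (Fin m → Fin 2) ℂ :=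
  ((α.sort (· ≤ ·)).map (Egen m)).prod

/-- 𝓑 = { i^λ E_α : λ ∈ {0,1}, α ⊆ {1,…,2m} }. -/
noncomputable def Bset (m : ℕ) : Set (Matrix (Fin m → Fin 2) (Fin m → Fin 2) ℂ) :=
  { A | ∃ (l : ZMod 2) (α : Finset (Fin (2 * m))),
      A = Complex.I ^ l.val • Eprod m α }

/-- I₂, X, Z, iXZ, indexed by `Fin 4`. -/
noncomputable def pauliFam : Fin 4 → Matrix (Fin 2) (Fin 2) ℂ :=
  ![1, X2, Z2, Complex.I • (X2 * Z2)]

/-- The Pauli group G_m = { i^μ B₁ ⊗ ⋯ ⊗ B_m : μ ∈ ℤ₄, B_k ∈ {I₂, X, Z, iXZ} }. -/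
noncomputable def PauliGroup (m : ℕ) :
    Set (Matrix (Fin m → Fin 2) (Fin m → Fin 2) ℂ) :=
  { A | ∃ (μ : ZMod 4) (B : Fin m → Fin 4),
      A = Complex.I ^ μ.val • kronPow m (fun k => pauliFam (B k)) }


/-!
Label a Pauli string by its symplectic vector `v ∈ (𝔽₂²)^m`, the letter at a site with label
`(x, z)` being `i^{xz} X^x Z^z`. Multiplying two strings adds their labels up to a power of `i`,
and the phased strings `i^μ P_v` are pairwise distinct, since `tr (P_v P_wᴴ) = 2^m [v = w]`.
Hence `E_α = i^φ P_{L α}` with `L α = ∑_{k ∈ α} L(E_k)`. At site `j` the `x`-part of `L α` is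
`[j ∈ α] + [j + m ∈ α]` and the `z`-part is `[j ∈ α]` plus the `x`-parts at the sites after `j`,
so `α` can be read back from `L α`; as `2^{2m} = 4^m`, `L` is a bijection. Thus `i^μ E_α`,
`μ ∈ ℤ₄`, runs over `G_m` without repetition, and `𝓑`, `-𝓑` are its parts with `μ ∈ {0, 1}`
and `μ ∈ {2, 3}`.
-/

section CliffordPauli

variable {m : ℕ}

lemma kronPow_mul (B C : Fin m → Matrix (Fin 2) (Fin 2) ℂ) :
    kronPow m B * kronPow m C = kronPow m fun k => B k * C k := by
  ext i j
  simp only [kronPow, mul_apply, of_apply]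
  rw [Fintype.prod_sum fun k t => B k (i k) t * C k t (j k)]
  exact Finset.sum_congr rfl fun x _ => Finset.prod_mul_distrib.symm

lemma kronPow_smul (c : Fin m → ℂ) (B : Fin m → Matrix (Fin 2) (Fin 2) ℂ) :
    kronPow m (fun k => c k • B k) = (∏ k, c k) • kronPow m B := by
  ext i j
  simp [kronPow, Finset.prod_mul_distrib]

lemma kronPow_one : kronPow m (fun _ => 1) = 1 := by
  ext i j
  by_cases h : i = j
  · subst h; simp [kronPow]
  · obtain ⟨k, hk⟩ := Function.ne_iff.mp h
    simpa [kronPow, one_apply, h] using Finset.prod_eq_zero (Finset.mem_univ k) (by simp [hk])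

lemma conjTranspose_kronPow (B : Fin m → Matrix (Fin 2) (Fin 2) ℂ) :
    (kronPow m B)ᴴ = kronPow m fun k => (B k)ᴴ := by
  ext i j
  simp [kronPow, conjTranspose_apply]

lemma trace_kronPow (B : Fin m → Matrix (Fin 2) (Fin 2) ℂ) :
    (kronPow m B).trace = ∏ k, (B k).trace := by
  simp only [trace, diag, kronPow, of_apply]
  rw [Fintype.prod_sum fun k t => B k t t]

lemma I_pow_val_add (a b : ZMod 4) :
    Complex.I ^ (a + b).val = Complex.I ^ a.val * Complex.I ^ b.val := by
  rw [← pow_add, Complex.I_pow_eq_pow_mod (a.val + b.val), ZMod.val_add]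

lemma I_pow_val_sum {ι : Type*} (s : Finset ι) (f : ι → ZMod 4) :
    ∏ k ∈ s, Complex.I ^ (f k).val = Complex.I ^ (∑ k ∈ s, f k).val := by
  induction s using Finset.cons_induction with
  | empty => simp
  | cons a s ha ih => rw [Finset.prod_cons, Finset.sum_cons, I_pow_val_add, ih]

lemma I_pow_val_injective : Function.Injective fun μ : ZMod 4 => Complex.I ^ μ.val :=
  fun a b h => ZMod.val_injective 4 (Complex.isPrimitiveRoot_I.pow_inj a.val_lt b.val_lt h)

/-- `(x, z) ↦ x + 2 z`, so that `pauliFam (pauliIndex (x, z)) = i^{xz} X^x Z^z`. -/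
def pauliIndex : ZMod 2 × ZMod 2 ≃ Fin 4 :=
  (Equiv.prodComm _ _).trans (finProdFinEquiv : Fin 2 × Fin 2 ≃ Fin 4)

noncomputable def pauliLetter (v : ZMod 2 × ZMod 2) : Matrix (Fin 2) (Fin 2) ℂ :=
  pauliFam (pauliIndex v)

lemma pauliLetter_zero : pauliLetter 0 = 1 := rfl

lemma pauliLetter_I : pauliLetter (0, 0) = !![1, 0; 0, 1] := by
  rw [← one_fin_two]; rfl

lemma pauliLetter_X : pauliLetter (1, 0) = !![0, 1; 1, 0] := rfl

lemma pauliLetter_Z : pauliLetter (0, 1) = !![1, 0; 0, -1] := rfl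

lemma pauliLetter_Y : pauliLetter (1, 1) = !![0, -Complex.I; Complex.I, 0] := by
  simp [pauliLetter, pauliIndex, pauliFam, X2, Z2, finProdFinEquiv]; rfl

lemma pauliLabel_cases (v : ZMod 2 × ZMod 2) :
    v = (0, 0) ∨ v = (1, 0) ∨ v = (0, 1) ∨ v = (1, 1) := by
  decide +revert

lemma pauliLetter_mul (v w : ZMod 2 × ZMod 2) :
    ∃ μ : ZMod 4, pauliLetter v * pauliLetter w = Complex.I ^ μ.val • pauliLetter (v + w) := by
  have h11 : (1 : ZMod 2) + 1 = 0 := rfl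
  have hval1 : (1 : ZMod 4).val = 1 := rfl
  have hval3 : (3 : ZMod 4).val = 3 := rfl
  rcases pauliLabel_cases v with rfl | rfl | rfl | rfl <;>
  rcases pauliLabel_cases w with rfl | rfl | rfl | rfl <;>
  simp only [Prod.mk_add_mk, h11, add_zero, zero_add,
    pauliLetter_I, pauliLetter_X, pauliLetter_Y, pauliLetter_Z] <;>
  first
  | (refine ⟨0, ?_⟩; simp; done)
  | (refine ⟨1, ?_⟩; simp [hval1]; done)
  | (refine ⟨3, ?_⟩; simp [hval3, Complex.I_pow_three])

lemma trace_pauliLetter_mul_conjTranspose (v w : ZMod 2 × ZMod 2) :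
    (pauliLetter v * (pauliLetter w)ᴴ).trace = if v = w then 2 else 0 := by
  rcases pauliLabel_cases v with rfl | rfl | rfl | rfl <;>
  rcases pauliLabel_cases w with rfl | rfl | rfl | rfl <;>
  simp only [trace_fin_two, mul_apply, Fin.sum_univ_two, conjTranspose_apply, pauliLetter_I,
    pauliLetter_X, pauliLetter_Y, pauliLetter_Z] <;> norm_num

noncomputable def pauliString (v : Fin m → ZMod 2 × ZMod 2) :
    Matrix (Fin m → Fin 2) (Fin m → Fin 2) ℂ :=
  kronPow m fun k => pauliLetter (v k)

lemma pauliString_zero : pauliString (0 : Fin m → ZMod 2 × ZMod 2) = 1 := by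
  simp only [pauliString, Pi.zero_apply, pauliLetter_zero]
  exact kronPow_one

lemma pauliString_mul (v w : Fin m → ZMod 2 × ZMod 2) :
    ∃ μ : ZMod 4, pauliString v * pauliString w = Complex.I ^ μ.val • pauliString (v + w) := by
  choose μ hμ using pauliLetter_mul
  refine ⟨∑ k, μ (v k) (w k), ?_⟩
  simp only [pauliString, kronPow_mul, hμ, kronPow_smul, I_pow_val_sum, Pi.add_apply]

lemma trace_pauliString_mul_conjTranspose (v w : Fin m → ZMod 2 × ZMod 2) :
    (pauliString v * (pauliString w)ᴴ).trace = if v = w then 2 ^ m else 0 := by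
  simp only [pauliString, conjTranspose_kronPow, kronPow_mul, trace_kronPow,
    trace_pauliLetter_mul_conjTranspose]
  split_ifs with h
  · simp [h]
  · obtain ⟨k, hk⟩ := Function.ne_iff.mp h
    exact Finset.prod_eq_zero (Finset.mem_univ k) (if_neg hk)

lemma smul_pauliString_inj {μ ν : ZMod 4} {v w : Fin m → ZMod 2 × ZMod 2}
    (h : Complex.I ^ μ.val • pauliString v = Complex.I ^ ν.val • pauliString w) :
    μ = ν ∧ v = w := by
  have htr := congrArg (fun A => (A * (pauliString w)ᴴ).trace) h
  simp only [smul_mul, trace_smul, trace_pauliString_mul_conjTranspose, smul_eq_mul] at htr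
  obtain rfl : v = w := by
    by_contra hvw
    simp [hvw] at htr
  rw [if_pos rfl] at htr
  exact ⟨I_pow_val_injective (mul_right_cancel₀ (pow_ne_zero m two_ne_zero) htr), rfl⟩

def HasPauliLabel (A : Matrix (Fin m → Fin 2) (Fin m → Fin 2) ℂ)
    (v : Fin m → ZMod 2 × ZMod 2) : Prop :=
  ∃ μ : ZMod 4, A = Complex.I ^ μ.val • pauliString v

lemma hasPauliLabel_one : HasPauliLabel (1 : Matrix (Fin m → Fin 2) (Fin m → Fin 2) ℂ) 0 :=
  ⟨0, by rw [pauliString_zero, ZMod.val_zero, pow_zero, one_smul]⟩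

lemma HasPauliLabel.mul {A B : Matrix (Fin m → Fin 2) (Fin m → Fin 2) ℂ}
    {v w : Fin m → ZMod 2 × ZMod 2} (hA : HasPauliLabel A v) (hB : HasPauliLabel B w) :
    HasPauliLabel (A * B) (v + w) := by
  obtain ⟨μ, rfl⟩ := hA
  obtain ⟨ν, rfl⟩ := hB
  obtain ⟨κ, hκ⟩ := pauliString_mul v w
  exact ⟨μ + ν + κ, by rw [smul_mul_smul, hκ, smul_smul, I_pow_val_add, I_pow_val_add]⟩

lemma HasPauliLabel.list_prod {ι : Type*} {A : ι → Matrix (Fin m → Fin 2) (Fin m → Fin 2) ℂ}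
    {v : ι → Fin m → ZMod 2 × ZMod 2} (h : ∀ i, HasPauliLabel (A i) (v i)) (l : List ι) :
    HasPauliLabel (l.map A).prod (l.map v).sum := by
  induction l with
  | nil => exact hasPauliLabel_one
  | cons i l ih => simpa only [List.map_cons, List.prod_cons, List.sum_cons] using (h i).mul ih

def genLabel (m : ℕ) (k : Fin (2 * m)) (j : Fin m) : ZMod 2 × ZMod 2 :=
  if k.val < m then
    (if j.val < k.val then (0, 1) else if j.val = k.val then (1, 1) else 0)
  else
    (if j.val < k.val - m then (0, 1) else if j.val = k.val - m then (1, 0) else 0)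

def cliffordLabel (m : ℕ) (α : Finset (Fin (2 * m))) : Fin m → ZMod 2 × ZMod 2 :=
  ∑ k ∈ α, genLabel m k

lemma hasPauliLabel_Egen (k : Fin (2 * m)) : HasPauliLabel (Egen m k) (genLabel m k) := by
  refine ⟨1, ?_⟩
  rw [show (1 : ZMod 4).val = 1 from rfl, pow_one, Egen, pauliString]
  congr 2
  funext j
  simp only [genLabel]
  split_ifs <;> rfl

lemma hasPauliLabel_Eprod (α : Finset (Fin (2 * m))) :
    HasPauliLabel (Eprod m α) (cliffordLabel m α) := by
  have h := HasPauliLabel.list_prod hasPauliLabel_Egen (α.sort (· ≤ ·))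
  rwa [((Finset.sort_perm_toList _ _).map _).sum_eq, Finset.sum_map_toList] at h

lemma genLabel_finProdFinEquiv (b : Fin 2) (i j : Fin m) :
    genLabel m (finProdFinEquiv (b, i)) j =
      (if j = i then (1, if b = 0 then 1 else 0) else 0) + if j < i then (0, 1) else 0 := by
  have hi := i.isLt
  fin_cases b <;>
  simp only [genLabel, finProdFinEquiv_apply_val, Fin.ext_iff, Fin.lt_def] <;>
  split_ifs <;> first | omega | rfl

/-- `finProdFinEquiv (b, i) = i + m b`: `b = 0` and `b = 1` record `E_{i+1}` and `E_{i+m+1}`. -/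
def memBit (α : Finset (Fin (2 * m))) (b : Fin 2) (i : Fin m) : ZMod 2 :=
  if finProdFinEquiv (b, i) ∈ α then 1 else 0

lemma cliffordLabel_apply (α : Finset (Fin (2 * m))) (j : Fin m) :
    cliffordLabel m α j = (memBit α 0 j + memBit α 1 j,
      memBit α 0 j + ∑ i ∈ Finset.Ioi j, (memBit α 0 i + memBit α 1 i)) := by
  have hsum : cliffordLabel m α j = ∑ k, (if k ∈ α then 1 else 0 : ZMod 2) • genLabel m k j := by
    simp [cliffordLabel, ite_smul, Finset.sum_ite_mem]
  rw [hsum, ← finProdFinEquiv.sum_comp, Fintype.sum_prod_type, Fin.sum_univ_two]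
  change ∑ i, memBit α 0 i • _ + ∑ i, memBit α 1 i • _ = _
  simp only [genLabel_finProdFinEquiv]
  rw [← Finset.filter_lt_eq_Ioi, Finset.sum_filter]
  ext <;> simp [Prod.fst_sum, Prod.snd_sum, apply_ite Prod.fst, apply_ite Prod.snd,
    Finset.sum_add_distrib, ite_add_zero, add_assoc]

lemma eq_of_memBit_eq {α β : Finset (Fin (2 * m))} (h : ∀ b i, memBit α b i = memBit β b i) :
    α = β := by
  ext k
  obtain ⟨⟨b, i⟩, rfl⟩ := finProdFinEquiv.surjective k
  have hbi := h b i
  unfold memBit at hbi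
  split_ifs at hbi <;> simp_all

lemma cliffordLabel_injective : Function.Injective (cliffordLabel m) := by
  intro α β h
  have hx (j : Fin m) : memBit α 0 j + memBit α 1 j = memBit β 0 j + memBit β 1 j := by
    simpa [cliffordLabel_apply] using congrArg Prod.fst (congrFun h j)
  have h0 (j : Fin m) : memBit α 0 j = memBit β 0 j := by
    have hz := congrArg Prod.snd (congrFun h j)
    simp only [cliffordLabel_apply, hx] at hz
    exact add_right_cancel hz
  refine eq_of_memBit_eq fun b i => ?_
  fin_cases b
  · exact h0 i
  · simpa [h0 i] using hx i

lemma cliffordLabel_bijective : Function.Bijective (cliffordLabel m) := by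
  rw [Fintype.bijective_iff_injective_and_card]
  refine ⟨cliffordLabel_injective, ?_⟩
  simp [Fintype.card_finset, pow_mul]

lemma mem_pauliGroup_iff (A : Matrix (Fin m → Fin 2) (Fin m → Fin 2) ℂ) :
    A ∈ PauliGroup m ↔ ∃ μ : ZMod 4, ∃ α, A = Complex.I ^ μ.val • Eprod m α := by
  have hstring (v : Fin m → ZMod 2 × ZMod 2) :
      kronPow m (fun k => pauliFam (pauliIndex (v k))) = pauliString v := rfl
  constructor
  · rintro ⟨μ, B, rfl⟩
    obtain ⟨α, hα⟩ := cliffordLabel_bijective.surjective (pauliIndex.symm ∘ B)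
    obtain ⟨φ, hφ⟩ := hasPauliLabel_Eprod α
    refine ⟨μ - φ, α, ?_⟩
    rw [hφ, hα, smul_smul, ← I_pow_val_add, sub_add_cancel, ← hstring]
    simp
  · rintro ⟨μ, α, rfl⟩
    obtain ⟨φ, hφ⟩ := hasPauliLabel_Eprod α
    exact ⟨μ + φ, pauliIndex ∘ cliffordLabel m α, by rw [hφ, smul_smul, ← I_pow_val_add]; rfl⟩

lemma smul_Eprod_inj {μ ν : ZMod 4} {α β : Finset (Fin (2 * m))}
    (h : Complex.I ^ μ.val • Eprod m α = Complex.I ^ ν.val • Eprod m β) : μ = ν ∧ α = β := by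
  obtain ⟨φ, hφ⟩ := hasPauliLabel_Eprod α
  obtain ⟨ψ, hψ⟩ := hasPauliLabel_Eprod β
  rw [hφ, hψ, smul_smul, smul_smul, ← I_pow_val_add, ← I_pow_val_add] at h
  obtain ⟨hphase, hlabel⟩ := smul_pauliString_inj h
  obtain rfl := cliffordLabel_injective hlabel
  obtain rfl : φ = ψ := (smul_pauliString_inj (hφ.symm.trans hψ)).1
  exact ⟨add_right_cancel hphase, rfl⟩

lemma mem_Bset_iff (A : Matrix (Fin m → Fin 2) (Fin m → Fin 2) ℂ) :
    A ∈ Bset m ↔ ∃ μ : ZMod 4, μ.val < 2 ∧ ∃ α, A = Complex.I ^ μ.val • Eprod m α := by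
  constructor
  · rintro ⟨l, α, rfl⟩
    have hl := l.val_lt
    have hval : ((l.val : ℕ) : ZMod 4).val = l.val := ZMod.val_cast_of_lt (by omega)
    exact ⟨l.val, by rw [hval]; exact hl, α, by rw [hval]⟩
  · rintro ⟨μ, hμ, α, rfl⟩
    exact ⟨μ.val, α, by rw [ZMod.val_cast_of_lt hμ]⟩

lemma mem_neg_Bset_iff (A : Matrix (Fin m → Fin 2) (Fin m → Fin 2) ℂ) :
    A ∈ (fun A => -A) '' Bset m ↔
      ∃ μ : ZMod 4, 2 ≤ μ.val ∧ ∃ α, A = Complex.I ^ μ.val • Eprod m α := by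
  have I_pow_add_two (n : ℕ) : Complex.I ^ (n + 2) = -Complex.I ^ n := by
    rw [pow_add, Complex.I_sq, mul_neg_one]
  constructor
  · rintro ⟨_, ⟨l, α, rfl⟩, rfl⟩
    have hl := l.val_lt
    have hval : ((l.val + 2 : ℕ) : ZMod 4).val = l.val + 2 := ZMod.val_cast_of_lt (by omega)
    exact ⟨(l.val + 2 : ℕ), by omega, α, by rw [hval, I_pow_add_two, neg_smul]⟩
  · rintro ⟨μ, hμ, α, rfl⟩
    have hval : ((μ.val - 2 : ℕ) : ZMod 2).val = μ.val - 2 :=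
      ZMod.val_cast_of_lt (by have := μ.val_lt; omega)
    refine ⟨_, ⟨(μ.val - 2 : ℕ), α, rfl⟩, ?_⟩
    dsimp only
    rw [hval, ← neg_smul, ← I_pow_add_two, Nat.sub_add_cancel hμ]

end CliffordPauli

theorem Bset_union_neg_eq_pauliGroup (m : ℕ) :
    Bset m ∪ ((fun A => -A) '' Bset m) = PauliGroup m ∧
    Bset m ∩ ((fun A => -A) '' Bset m) = ∅ := by
  constructor
  · ext A
    rw [Set.mem_union, mem_Bset_iff, mem_neg_Bset_iff, mem_pauliGroup_iff]
    constructor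
    · rintro (⟨μ, -, h⟩ | ⟨μ, -, h⟩) <;> exact ⟨μ, h⟩
    · rintro ⟨μ, h⟩
      rcases lt_or_ge μ.val 2 with hμ | hμ
      exacts [Or.inl ⟨μ, hμ, h⟩, Or.inr ⟨μ, hμ, h⟩]
  · refine Set.eq_empty_of_forall_notMem fun A ⟨hpos, hneg⟩ => ?_
    obtain ⟨μ, hμ, α, rfl⟩ := (mem_Bset_iff A).1 hpos
    obtain ⟨ν, hν, β, h⟩ := (mem_neg_Bset_iff _).1 hneg
    obtain rfl := (smul_Eprod_inj h).1
    omega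
end

section
/- Construction A preserves group decodability: let l ∈ {0,1,2} and let S₁,...,S_g ⊆ F₂ ⊕ F₄^m be disjoint nonempty sets with wt(y+z) odd whenever y ∈ S_i, z ∈ S_j, i ≠ j. Define S̃_i = { [y,0] : y ∈ S_i } ∪ { [y,ω^l] + δ : y ∈ S_i } ⊆ F₂ ⊕ F₄^{m+1}, where [y,ξ] appends ξ ∈ F₄ as a last coordinate and δ = [1,0,...,0]. Then the S̃_i are pairwise disjoint, each |S̃_i| = 2|S_i|, and wt(y+z) is odd whenever y ∈ S̃_i, z ∈ S̃_j, i ≠ j. Moreover, if wt(y+z) is even for all y, z ∈ S_i, then wt(y+z) is even for all y, z ∈ S̃_i. -/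
def add4 : Fin 4 → Fin 4 → Fin 4 :=
  ![![0, 1, 2, 3], ![1, 0, 3, 2], ![2, 3, 0, 1], ![3, 2, 1, 0]]

def addV {m : ℕ} (p q : ZMod 2 × (Fin m → Fin 4)) : ZMod 2 × (Fin m → Fin 4) :=
  (p.1 + q.1, fun k => add4 (p.2 k) (q.2 k))

def wtV {m : ℕ} (p : ZMod 2 × (Fin m → Fin 4)) : ℕ :=
  (if p.1 ≠ 0 then 1 else 0) + (Finset.univ.filter fun k => p.2 k ≠ 0).card

/-- Append an extra F₄-coordinate: [y, ξ]. -/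
def app {m : ℕ} (y : ZMod 2 × (Fin m → Fin 4)) (ξ : Fin 4) :
    ZMod 2 × (Fin (m + 1) → Fin 4) :=
  (y.1, Fin.snoc y.2 ξ)

/-- δ = [1, 0, …, 0]. -/
def deltaV (m : ℕ) : ZMod 2 × (Fin m → Fin 4) := ((1 : ZMod 2), fun _ => 0)

/-!
Appending a coordinate and adding `δ` commute with `addV`, and `δ` only toggles the `F₂`
coordinate. For lifts `Y`, `Z` of `y`, `z`, the sum `Y + Z` is therefore `[y + z, 0]` or
`[y + z, ξ] + δ`; in the second case the new coordinate adds one to the weight and `δ` changes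
it by one, so in all cases `wt(Y + Z) ≡ wt(y + z) (mod 2)`. Disjointness then follows from
`wt(Y + Y) = 0` being even, and the two halves of `S̃ᵢ` are separated by their last coordinate.
-/

lemma add4_comm : ∀ a b, add4 a b = add4 b a := by decide

lemma add4_assoc : ∀ a b c, add4 (add4 a b) c = add4 a (add4 b c) := by decide

lemma add4_zero : ∀ a, add4 a 0 = a := by decide

lemma zero_add4 : ∀ a, add4 0 a = a := by decide

lemma add4_self : ∀ a, add4 a a = 0 := by decide

section addV

variable {m : ℕ}

lemma addV_comm (p q : ZMod 2 × (Fin m → Fin 4)) : addV p q = addV q p :=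
  Prod.ext (add_comm _ _) (funext fun _ => add4_comm _ _)

lemma addV_assoc (p q r : ZMod 2 × (Fin m → Fin 4)) :
    addV (addV p q) r = addV p (addV q r) :=
  Prod.ext (add_assoc _ _ _) (funext fun _ => add4_assoc _ _ _)

lemma addV_self (p : ZMod 2 × (Fin m → Fin 4)) : addV p p = (0, fun _ => 0) :=
  Prod.ext (ZModModule.add_self _) (funext fun _ => add4_self _)

lemma wtV_addV_self (p : ZMod 2 × (Fin m → Fin 4)) : wtV (addV p p) = 0 := by
  simp [addV_self, wtV]

lemma addV_deltaV (p : ZMod 2 × (Fin m → Fin 4)) : addV p (deltaV m) = (p.1 + 1, p.2) :=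
  Prod.ext rfl (funext fun _ => add4_zero _)

lemma addV_deltaV_deltaV (p : ZMod 2 × (Fin m → Fin 4)) :
    addV (addV p (deltaV m)) (deltaV m) = p := by
  rw [addV_deltaV, addV_deltaV, add_assoc, ZModModule.add_self, add_zero]

lemma addV_deltaV_addV_deltaV (p q : ZMod 2 × (Fin m → Fin 4)) :
    addV (addV p (deltaV m)) (addV q (deltaV m)) = addV p q := by
  rw [addV_comm q, ← addV_assoc, addV_deltaV_deltaV]

lemma even_wtV_addV_deltaV_iff (p : ZMod 2 × (Fin m → Fin 4)) :
    Even (wtV (addV p (deltaV m))) ↔ ¬Even (wtV p) := by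
  rw [addV_deltaV]
  unfold wtV
  rcases (by decide : ∀ x : ZMod 2, x = 0 ∨ x = 1) p.1 with h | h <;>
    simp [h, (by decide : (1 : ZMod 2) + 1 = 0), parity_simps]

lemma addV_app (y z : ZMod 2 × (Fin m → Fin 4)) (a b : Fin 4) :
    addV (app y a) (app z b) = app (addV y z) (add4 a b) := by
  refine Prod.ext rfl (funext fun k => ?_)
  refine Fin.lastCases ?_ (fun i => ?_) k <;> simp [addV, app]

lemma wtV_app (p : ZMod 2 × (Fin m → Fin 4)) (c : Fin 4) :
    wtV (app p c) = wtV p + if c ≠ 0 then 1 else 0 := by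
  unfold wtV app
  simp only [Finset.card_filter]
  rw [Fin.sum_univ_castSucc]
  simp [add_assoc]

lemma app_injective (c : Fin 4) :
    Function.Injective (fun y : ZMod 2 × (Fin m → Fin 4) => app y c) := by
  intro y z h
  simp only [app, Prod.mk.injEq] at h
  exact Prod.ext h.1 (funext fun k => by simpa using congrFun h.2 k.castSucc)

end addV

def liftA {m : ℕ} (ξ : Fin 4) (s : Finset (ZMod 2 × (Fin m → Fin 4))) :
    Finset (ZMod 2 × (Fin (m + 1) → Fin 4)) :=
  s.image (fun y => app y 0) ∪ s.image (fun y => addV (app y ξ) (deltaV (m + 1)))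

section liftA

variable {m : ℕ} {ξ : Fin 4}

lemma even_wtV_addV_lift_iff (hξ : ξ ≠ 0) {y z : ZMod 2 × (Fin m → Fin 4)}
    {Y Z : ZMod 2 × (Fin (m + 1) → Fin 4)}
    (hY : Y = app y 0 ∨ Y = addV (app y ξ) (deltaV (m + 1)))
    (hZ : Z = app z 0 ∨ Z = addV (app z ξ) (deltaV (m + 1))) :
    Even (wtV (addV Y Z)) ↔ Even (wtV (addV y z)) := by
  have hwt : Even (wtV (app (addV y z) ξ)) ↔ ¬Even (wtV (addV y z)) := by
    simp [wtV_app, hξ, Nat.even_add_one]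
  rcases hY with rfl | rfl <;> rcases hZ with rfl | rfl
  · simp [addV_app, add4_self, wtV_app]
  · rw [← addV_assoc, addV_app, zero_add4, even_wtV_addV_deltaV_iff, hwt, not_not]
  · rw [addV_comm, ← addV_assoc, addV_app, zero_add4, even_wtV_addV_deltaV_iff, addV_comm z,
      hwt, not_not]
  · simp [addV_deltaV_addV_deltaV, addV_app, add4_self, wtV_app]

lemma exists_even_wtV_addV_iff_of_mem_liftA (hξ : ξ ≠ 0)
    {s t : Finset (ZMod 2 × (Fin m → Fin 4))} {Y Z : ZMod 2 × (Fin (m + 1) → Fin 4)}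
    (hY : Y ∈ liftA ξ s) (hZ : Z ∈ liftA ξ t) :
    ∃ y ∈ s, ∃ z ∈ t, (Even (wtV (addV Y Z)) ↔ Even (wtV (addV y z))) := by
  have hmem : ∀ {u : Finset (ZMod 2 × (Fin m → Fin 4))} {X}, X ∈ liftA ξ u →
      ∃ x ∈ u, X = app x 0 ∨ X = addV (app x ξ) (deltaV (m + 1)) := by
    intro u X hX
    rcases Finset.mem_union.1 hX with hX | hX <;>
      obtain ⟨x, hx, rfl⟩ := Finset.mem_image.1 hX
    exacts [⟨x, hx, .inl rfl⟩, ⟨x, hx, .inr rfl⟩]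
  obtain ⟨y, hy, hYy⟩ := hmem hY
  obtain ⟨z, hz, hZz⟩ := hmem hZ
  exact ⟨y, hy, z, hz, even_wtV_addV_lift_iff hξ hYy hZz⟩

lemma card_liftA (hξ : ξ ≠ 0) (s : Finset (ZMod 2 × (Fin m → Fin 4))) :
    (liftA ξ s).card = 2 * s.card := by
  have hlast : ∀ y z : ZMod 2 × (Fin m → Fin 4),
      app y 0 ≠ addV (app z ξ) (deltaV (m + 1)) := fun y z h =>
    hξ (by simpa [addV_deltaV, app] using (congrFun (congrArg Prod.snd h) (Fin.last m)).symm)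
  have hδ : Function.Injective (fun p : ZMod 2 × (Fin (m + 1) → Fin 4) => addV p (deltaV _)) :=
    Function.LeftInverse.injective (g := fun p => addV p (deltaV _)) addV_deltaV_deltaV
  rw [liftA, Finset.card_union_of_disjoint, Finset.card_image_of_injective _ (app_injective 0),
    Finset.card_image_of_injective (f := fun y => addV (app y ξ) (deltaV (m + 1))) _
      (hδ.comp (app_injective ξ)), two_mul]
  simp only [Finset.disjoint_left, Finset.mem_image]
  rintro _ ⟨y, -, rfl⟩ ⟨z, -, h⟩
  exact hlast y z h.symm

end liftA

theorem constructionA_general (m g : ℕ) (ξ : Fin 4) (hξ : ξ ≠ 0)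
    (S : Fin g → Finset (ZMod 2 × (Fin m → Fin 4)))
    (hodd : ∀ i j, i ≠ j → ∀ y ∈ S i, ∀ z ∈ S j, Odd (wtV (addV y z))) :
    let T : Fin g → Finset (ZMod 2 × (Fin (m + 1) → Fin 4)) :=
      fun i => (S i).image (fun y => app y 0) ∪
        (S i).image (fun y => addV (app y ξ) (deltaV (m + 1)))
    (∀ i j, i ≠ j → Disjoint (T i) (T j)) ∧
    (∀ i, (T i).card = 2 * (S i).card) ∧
    (∀ i j, i ≠ j → ∀ y ∈ T i, ∀ z ∈ T j, Odd (wtV (addV y z))) ∧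
    (∀ i, (∀ y ∈ S i, ∀ z ∈ S i, Even (wtV (addV y z))) →
      ∀ y ∈ T i, ∀ z ∈ T i, Even (wtV (addV y z))) := by
  intro T
  have hoddT : ∀ i j, i ≠ j → ∀ Y ∈ T i, ∀ Z ∈ T j, Odd (wtV (addV Y Z)) := by
    intro i j hij Y hY Z hZ
    obtain ⟨y, hy, z, hz, hiff⟩ :=
      exists_even_wtV_addV_iff_of_mem_liftA hξ hY hZ
    rw [← Nat.not_even_iff_odd, hiff, Nat.not_even_iff_odd]
    exact hodd i j hij y hy z hz
  refine ⟨fun i j hij => Finset.disjoint_left.2 fun Y hYi hYj => ?_,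
    fun i => card_liftA hξ (S i), hoddT, fun i heven Y hY Z hZ => ?_⟩
  · simpa [wtV_addV_self] using hoddT i j hij Y hYi Y hYj
  · obtain ⟨y, hy, z, hz, hiff⟩ :=
      exists_even_wtV_addV_iff_of_mem_liftA hξ hY hZ
    exact hiff.2 (heven y hy z hz)

/-- Construction A: S̃ᵢ = {[y,0] : y ∈ Sᵢ} ∪ {[y,ω^l] + δ : y ∈ Sᵢ}.
The nonzero element ω^l (l ∈ {0,1,2}) of F₄ is given as `ξ ≠ 0`. -/
theorem constructionA (m g : ℕ) (ξ : Fin 4) (hξ : ξ ≠ 0)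
    (S : Fin g → Finset (ZMod 2 × (Fin m → Fin 4)))
    (hne : ∀ i, (S i).Nonempty)
    (hdisj : ∀ i j, i ≠ j → Disjoint (S i) (S j))
    (hodd : ∀ i j, i ≠ j → ∀ y ∈ S i, ∀ z ∈ S j, Odd (wtV (addV y z))) :
    let T : Fin g → Finset (ZMod 2 × (Fin (m + 1) → Fin 4)) :=
      fun i => (S i).image (fun y => app y 0) ∪
        (S i).image (fun y => addV (app y ξ) (deltaV (m + 1)))
    (∀ i j, i ≠ j → Disjoint (T i) (T j)) ∧
    (∀ i, (T i).card = 2 * (S i).card) ∧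
    (∀ i j, i ≠ j → ∀ y ∈ T i, ∀ z ∈ T j, Odd (wtV (addV y z))) ∧
    (∀ i, (∀ y ∈ S i, ∀ z ∈ S i, Even (wtV (addV y z))) →
      ∀ y ∈ T i, ∀ z ∈ T i, Even (wtV (addV y z))) :=
  constructionA_general m g ξ hξ S hodd
end
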